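/- If A, B are Hermitian matrices forming a monotone pair and Z is normal, then Tr(Z*AZB) ≤ Tr(Z*ZAB). -/
import Mathlib


open Matrix ComplexOrder

/-- Apply a real function to a Hermitian matrix via the spectral decomposition. -/
noncomputable def hermFun {n : ℕ} {C : Matrix (Fin n) (Fin n) ℂ} (hC : C.IsHermitian)
    (f : ℝ → ℝ) : Matrix (Fin n) (Fin n) ℂ :=
  (hC.eigenvectorUnitary : Matrix (Fin n) (Fin n) ℂ) *
    Matrix.diagonal (fun i => (f (hC.eigenvalues i) : ℂ)) *
    (star (hC.eigenvectorUnitary : Matrix (Fin n) (Fin n) ℂ))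

/-- `(A, B)` is a monotone pair: `A = f(C)`, `B = g(C)` for a Hermitian `C` and
nondecreasing real functions `f`, `g`. -/
def MonotonePair {n : ℕ} (A B : Matrix (Fin n) (Fin n) ℂ) : Prop :=
  ∃ C : Matrix (Fin n) (Fin n) ℂ, ∃ hC : C.IsHermitian, ∃ f g : ℝ → ℝ,
    Monotone f ∧ Monotone g ∧ A = hermFun hC f ∧ B = hermFun hC g

/-- `(A, B)` is an antimonotone pair: `A = f(C)`, `B = g(C)` for a Hermitian `C`,
`f` nondecreasing and `g` nonincreasing. -/
def AntimonotonePair {n : ℕ} (A B : Matrix (Fin n) (Fin n) ℂ) : Prop :=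
  ∃ C : Matrix (Fin n) (Fin n) ℂ, ∃ hC : C.IsHermitian, ∃ f g : ℝ → ℝ,
    Monotone f ∧ Antitone g ∧ A = hermFun hC f ∧ B = hermFun hC g

/-- The Frobenius (Hilbert–Schmidt) norm `(Tr X*X)^(1/2)`. -/
noncomputable def frobNorm {n : ℕ} (X : Matrix (Fin n) (Fin n) ℂ) : ℝ :=
  Real.sqrt ((Matrix.trace (Xᴴ * X)).re)



lemma cut_balance {n : ℕ} (p : Fin n → Fin n → ℝ)
    (hbal : ∀ j, ∑ i, p i j = ∑ i, p j i) (T : Finset (Fin n)) :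
    ∑ j ∈ T, ∑ i ∈ Tᶜ, p i j = ∑ j ∈ Tᶜ, ∑ i ∈ T, p i j := by
  have h1 : ∑ j ∈ T, ∑ i, p i j = ∑ j ∈ T, ∑ i, p j i :=
    Finset.sum_congr rfl fun j _ => hbal j
  have h2 : ∀ j, ∑ i, p i j = ∑ i ∈ T, p i j + ∑ i ∈ Tᶜ, p i j :=
    fun j => (Finset.sum_add_sum_compl T _).symm
  have h3 : ∀ j, ∑ i, p j i = ∑ i ∈ T, p j i + ∑ i ∈ Tᶜ, p j i :=
    fun j => (Finset.sum_add_sum_compl T _).symm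
  simp only [h2, h3, Finset.sum_add_distrib] at h1
  have h4 : ∑ j ∈ T, ∑ i ∈ T, p i j = ∑ j ∈ T, ∑ i ∈ T, p j i := Finset.sum_comm
  have h5 : ∑ j ∈ T, ∑ i ∈ Tᶜ, p j i = ∑ j ∈ Tᶜ, ∑ i ∈ T, p i j := Finset.sum_comm
  linarith

lemma step_lemma {n : ℕ} (p : Fin n → Fin n → ℝ) (hp : ∀ i j, 0 ≤ p i j)
    (hbal : ∀ j, ∑ i, p i j = ∑ i, p j i) (T : Finset (Fin n)) (V : Fin n → ℝ)
    (hTV : ∀ i ∈ T, ∀ j, j ∉ T → V j ≤ V i) :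
    0 ≤ ∑ j, ∑ i, p i j * ((if j ∈ T then (1:ℝ) else 0) - (if i ∈ T then 1 else 0)) * V j := by
  have hsplit : ∑ j, ∑ i, p i j * ((if j ∈ T then (1:ℝ) else 0) - (if i ∈ T then 1 else 0)) * V j
      = ∑ j ∈ T, ∑ i ∈ Tᶜ, p i j * V j - ∑ j ∈ Tᶜ, ∑ i ∈ T, p i j * V j := by
    rw [← Finset.sum_add_sum_compl T]
    congr 1
    · refine Finset.sum_congr rfl fun j hj => ?_
      rw [← Finset.sum_add_sum_compl T]
      have : ∑ i ∈ T, p i j * ((if j ∈ T then (1:ℝ) else 0) - (if i ∈ T then 1 else 0)) * V j = 0 := by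
        refine Finset.sum_eq_zero fun i hi => by simp [hi, hj]
      rw [this, zero_add]
      refine Finset.sum_congr rfl fun i hi => ?_
      simp only [Finset.mem_compl] at hi
      simp [hi, hj]
    · rw [← Finset.sum_neg_distrib]
      refine Finset.sum_congr rfl fun j hj => ?_
      simp only [Finset.mem_compl] at hj
      rw [← Finset.sum_add_sum_compl T]
      have h0 : ∑ i ∈ Tᶜ, p i j * ((if j ∈ T then (1:ℝ) else 0) - (if i ∈ T then 1 else 0)) * V j = 0 := by
        refine Finset.sum_eq_zero fun i hi => ?_
        simp only [Finset.mem_compl] at hi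
        simp [hi, hj]
      have h1 : ∑ i ∈ T, p i j * ((if j ∈ T then (1:ℝ) else 0) - (if i ∈ T then 1 else 0)) * V j
          = -∑ i ∈ T, p i j * V j := by
        rw [← Finset.sum_neg_distrib]
        refine Finset.sum_congr rfl fun i hi => ?_
        simp [hi, hj]
      rw [h0, h1, add_zero]
  rw [hsplit, sub_nonneg]
  by_cases hTc : Tᶜ.Nonempty
  · set t : ℝ := Tᶜ.sup' hTc V with ht
    have hub : ∀ j ∈ Tᶜ, V j ≤ t := fun j hj => Finset.le_sup' V hj
    have hlb : ∀ j ∈ T, t ≤ V j := fun j hj =>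
      Finset.sup'_le hTc V fun i hi => hTV j hj i (Finset.mem_compl.mp hi)
    calc ∑ j ∈ Tᶜ, ∑ i ∈ T, p i j * V j
        ≤ ∑ j ∈ Tᶜ, ∑ i ∈ T, p i j * t := by
          refine Finset.sum_le_sum fun j hj => Finset.sum_le_sum fun i hi => ?_
          exact mul_le_mul_of_nonneg_left (hub j hj) (hp i j)
      _ = (∑ j ∈ Tᶜ, ∑ i ∈ T, p i j) * t := by
          rw [Finset.sum_mul]; exact Finset.sum_congr rfl fun j _ => by rw [Finset.sum_mul]
      _ = (∑ j ∈ T, ∑ i ∈ Tᶜ, p i j) * t := by rw [cut_balance p hbal T]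
      _ = ∑ j ∈ T, ∑ i ∈ Tᶜ, p i j * t := by
          rw [Finset.sum_mul]; exact Finset.sum_congr rfl fun j _ => by rw [Finset.sum_mul]
      _ ≤ ∑ j ∈ T, ∑ i ∈ Tᶜ, p i j * V j := by
          refine Finset.sum_le_sum fun j hj => Finset.sum_le_sum fun i hi => ?_
          exact mul_le_mul_of_nonneg_left (hlb j hj) (hp i j)
  · rw [Finset.not_nonempty_iff_eq_empty] at hTc
    simp [hTc]

lemma key_aux {n : ℕ} (p : Fin n → Fin n → ℝ) (hp : ∀ i j, 0 ≤ p i j)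
    (hbal : ∀ j, ∑ i, p i j = ∑ i, p j i) (μ : Fin n → ℝ) (V : Fin n → ℝ)
    (hV : ∀ i j, μ i ≤ μ j → V i ≤ V j) :
    ∀ k : ℕ, ∀ U : Fin n → ℝ, (Finset.image U Finset.univ).card ≤ k →
      (∀ i j, μ i ≤ μ j → U i ≤ U j) →
      0 ≤ ∑ j, ∑ i, p i j * (U j - U i) * V j := by
  intro k
  induction k with
  | zero =>
    intro U hcard _
    have : Finset.image U Finset.univ = ∅ := Finset.card_eq_zero.mp (Nat.le_zero.mp hcard)
    have huniv : (Finset.univ : Finset (Fin n)) = ∅ := Finset.image_eq_empty.mp this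
    simp [huniv]
  | succ k ih =>
    intro U hcard hU
    by_cases h1 : (Finset.image U Finset.univ).card ≤ 1
    · -- U is constant, sum is zero
      have hconst : ∀ i j : Fin n, U i = U j := by
        intro i j
        exact Finset.card_le_one.mp h1 _ (Finset.mem_image_of_mem U (Finset.mem_univ i))
          _ (Finset.mem_image_of_mem U (Finset.mem_univ j))
      have : ∑ j, ∑ i, p i j * (U j - U i) * V j = 0 := by
        refine Finset.sum_eq_zero fun j _ => Finset.sum_eq_zero fun i _ => ?_
        rw [hconst j i]; ring
      rw [this]
    · push_neg at h1
      set I : Finset ℝ := Finset.image U Finset.univ with hI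
      have hIne : I.Nonempty := Finset.card_pos.mp (by omega)
      set M : ℝ := I.max' hIne with hM
      have hI'ne : (I.erase M).Nonempty := by
        rw [← Finset.card_pos, Finset.card_erase_of_mem (I.max'_mem hIne)]
        omega
      set m : ℝ := (I.erase M).max' hI'ne with hm
      have hmI : m ∈ I.erase M := (I.erase M).max'_mem hI'ne
      have hmM : m < M :=
        lt_of_le_of_ne (I.le_max' m (Finset.mem_of_mem_erase hmI)) (Finset.ne_of_mem_erase hmI)
      set W : Fin n → ℝ := fun i => min (U i) m with hWdef
      set T : Finset (Fin n) := Finset.univ.filter (fun i => U i = M) with hT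
      have hUle : ∀ i, U i ≤ M := fun i => I.le_max' _ (Finset.mem_image_of_mem U (Finset.mem_univ i))
      have hUlem : ∀ i, U i ≠ M → U i ≤ m := by
        intro i hi
        exact (I.erase M).le_max' _ (Finset.mem_erase.mpr ⟨hi, Finset.mem_image_of_mem U (Finset.mem_univ i)⟩)
      have hdecomp : ∀ i, U i = W i + (M - m) * (if i ∈ T then (1:ℝ) else 0) := by
        intro i
        by_cases hi : U i = M
        · have : i ∈ T := Finset.mem_filter.mpr ⟨Finset.mem_univ i, hi⟩
          simp only [this, if_pos, hWdef]
          rw [hi, min_eq_right hmM.le]; ring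
        · have hiT : i ∉ T := fun h => hi (Finset.mem_filter.mp h).2
          simp only [hiT, if_neg, not_false_iff, hWdef]
          rw [min_eq_left (hUlem i hi)]; ring
      have hWmono : ∀ i j, μ i ≤ μ j → W i ≤ W j := fun i j hij =>
        min_le_min (hU i j hij) le_rfl
      have hWcard : (Finset.image W Finset.univ).card ≤ k := by
        have hsub : Finset.image W Finset.univ ⊆ I.erase M := by
          intro x hx
          obtain ⟨i, _, rfl⟩ := Finset.mem_image.mp hx
          by_cases hi : U i ≤ m
          · rw [hWdef]; simp only []
            rw [min_eq_left hi]
            exact Finset.mem_erase.mpr ⟨(lt_of_le_of_lt hi hmM).ne,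
              Finset.mem_image_of_mem U (Finset.mem_univ i)⟩
          · rw [hWdef]; simp only []
            rw [min_eq_right (le_of_not_ge hi)]
            exact hmI
        calc (Finset.image W Finset.univ).card ≤ (I.erase M).card := Finset.card_le_card hsub
          _ = I.card - 1 := Finset.card_erase_of_mem (I.max'_mem hIne)
          _ ≤ k := by omega
      have hstep : 0 ≤ ∑ j, ∑ i, p i j * ((if j ∈ T then (1:ℝ) else 0) - (if i ∈ T then 1 else 0)) * V j := by
        refine step_lemma p hp hbal T V ?_
        intro i hi j hj
        have hUi : U i = M := (Finset.mem_filter.mp hi).2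
        have hUj : U j ≠ M := fun h => hj (Finset.mem_filter.mpr ⟨Finset.mem_univ j, h⟩)
        have : ¬ (μ i ≤ μ j) := by
          intro hle
          have := hU i j hle
          rw [hUi] at this
          exact hUj (le_antisymm (hUle j) this)
        exact hV j i (le_of_not_ge this)
      have hWpart : 0 ≤ ∑ j, ∑ i, p i j * (W j - W i) * V j := ih W hWcard hWmono
      have hsum : ∑ j, ∑ i, p i j * (U j - U i) * V j
          = ∑ j, ∑ i, p i j * (W j - W i) * V j
            + (M - m) * ∑ j, ∑ i, p i j * ((if j ∈ T then (1:ℝ) else 0) - (if i ∈ T then 1 else 0)) * V j := by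
        rw [Finset.mul_sum, ← Finset.sum_add_distrib]
        refine Finset.sum_congr rfl fun j _ => ?_
        rw [Finset.mul_sum, ← Finset.sum_add_distrib]
        refine Finset.sum_congr rfl fun i _ => ?_
        rw [hdecomp j, hdecomp i]
        ring
      rw [hsum]
      have := mul_nonneg (sub_nonneg.mpr hmM.le) hstep
      linarith

lemma key_ineq {n : ℕ} (p : Fin n → Fin n → ℝ) (hp : ∀ i j, 0 ≤ p i j)
    (hbal : ∀ j, ∑ i, p i j = ∑ i, p j i) (μ : Fin n → ℝ) (U V : Fin n → ℝ)
    (hU : ∀ i j, μ i ≤ μ j → U i ≤ U j) (hV : ∀ i j, μ i ≤ μ j → V i ≤ V j) :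
    ∑ j, ∑ i, p i j * U i * V j ≤ ∑ j, ∑ i, p i j * U j * V j := by
  have h := key_aux p hp hbal μ V hV (Finset.image U Finset.univ).card U le_rfl hU
  have hsplit : ∑ j, ∑ i, p i j * (U j - U i) * V j
      = ∑ j, ∑ i, p i j * U j * V j - ∑ j, ∑ i, p i j * U i * V j := by
    rw [← Finset.sum_sub_distrib]
    refine Finset.sum_congr rfl fun j _ => ?_
    rw [← Finset.sum_sub_distrib]
    refine Finset.sum_congr rfl fun i _ => by ring
  rw [hsplit] at h
  linarith


lemma trace_mul_diag {n : ℕ} (M : Matrix (Fin n) (Fin n) ℂ) (d : Fin n → ℂ) :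
    Matrix.trace (M * Matrix.diagonal d) = ∑ j, M j j * d j := by
  simp [Matrix.trace, Matrix.diag, Matrix.mul_apply, Matrix.diagonal_apply,
    mul_ite, mul_zero, Finset.sum_ite_eq']

lemma trace_form1 {n : ℕ} (W : Matrix (Fin n) (Fin n) ℂ) (a b : Fin n → ℝ) :
    Matrix.trace (star W * Matrix.diagonal (fun i => (a i : ℂ)) * W
        * Matrix.diagonal (fun i => (b i : ℂ)))
      = ((∑ j, ∑ i, (‖W i j‖^2 : ℝ) * a i * b j : ℝ) : ℂ) := by
  rw [trace_mul_diag]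
  push_cast
  refine Finset.sum_congr rfl fun j _ => ?_
  rw [Matrix.mul_assoc, Matrix.mul_apply, Finset.sum_mul]
  refine Finset.sum_congr rfl fun i _ => ?_
  rw [Matrix.diagonal_mul, Matrix.star_apply, Complex.star_def]
  have : (starRingEnd ℂ) (W i j) * ((a i : ℂ) * W i j) * (b j : ℂ)
      = ((starRingEnd ℂ) (W i j) * W i j) * (a i : ℂ) * (b j : ℂ) := by ring
  rw [this, Complex.conj_mul']

lemma trace_form2 {n : ℕ} (W : Matrix (Fin n) (Fin n) ℂ) (a b : Fin n → ℝ) :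
    Matrix.trace (star W * W * Matrix.diagonal (fun i => (a i : ℂ))
        * Matrix.diagonal (fun i => (b i : ℂ)))
      = ((∑ j, ∑ i, (‖W i j‖^2 : ℝ) * a j * b j : ℝ) : ℂ) := by
  rw [Matrix.mul_assoc, Matrix.diagonal_mul_diagonal, trace_mul_diag]
  push_cast
  refine Finset.sum_congr rfl fun j _ => ?_
  rw [Matrix.mul_apply, Finset.sum_mul]
  refine Finset.sum_congr rfl fun i _ => ?_
  rw [Matrix.star_apply, Complex.star_def]
  have : (starRingEnd ℂ) (W i j) * W i j * ((a j : ℂ) * (b j : ℂ))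
      = ((starRingEnd ℂ) (W i j) * W i j) * (a j : ℂ) * (b j : ℂ) := by ring
  rw [this, Complex.conj_mul']

lemma normal_balance {n : ℕ} (W : Matrix (Fin n) (Fin n) ℂ)
    (hWn : star W * W = W * star W) (j : Fin n) :
    ∑ i, (‖W i j‖^2 : ℝ) = ∑ i, (‖W j i‖^2 : ℝ) := by
  have h : (star W * W) j j = (W * star W) j j := by rw [hWn]
  rw [Matrix.mul_apply, Matrix.mul_apply] at h
  have h1 : ∀ i, (star W) j i * W i j = (((‖W i j‖^2 : ℝ) : ℝ) : ℂ) := by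
    intro i; rw [Matrix.star_apply, Complex.star_def, Complex.conj_mul']; push_cast; ring
  have h2 : ∀ i, W j i * (star W) i j = (((‖W j i‖^2 : ℝ) : ℝ) : ℂ) := by
    intro i; rw [Matrix.star_apply, Complex.star_def, mul_comm, Complex.conj_mul']; push_cast; ring
  simp only [h1, h2] at h
  exact_mod_cast h

lemma conj_eq1 {n : ℕ} (Z : Matrix (Fin n) (Fin n) ℂ) (U : Matrix (Fin n) (Fin n) ℂ)
    (h1 : Uᴴ * U = 1) (h2 : U * Uᴴ = 1)
    (Df Dg : Matrix (Fin n) (Fin n) ℂ) :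
    Zᴴ * (U * Df * star U) * Z * (U * Dg * star U)
      = U * (star (star U * Z * U) * Df * (star U * Z * U) * Dg) * star U := by
  have hc1 : ∀ X : Matrix (Fin n) (Fin n) ℂ, U * (Uᴴ * X) = X := by
    intro X; rw [← Matrix.mul_assoc, h2, Matrix.one_mul]
  have hc2 : ∀ X : Matrix (Fin n) (Fin n) ℂ, Uᴴ * (U * X) = X := by
    intro X; rw [← Matrix.mul_assoc, h1, Matrix.one_mul]
  simp only [Matrix.star_eq_conjTranspose, Matrix.conjTranspose_mul,
    Matrix.conjTranspose_conjTranspose, Matrix.mul_assoc, hc1, hc2]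

lemma conj_eq2 {n : ℕ} (Z : Matrix (Fin n) (Fin n) ℂ) (U : Matrix (Fin n) (Fin n) ℂ)
    (h1 : Uᴴ * U = 1) (h2 : U * Uᴴ = 1)
    (Df Dg : Matrix (Fin n) (Fin n) ℂ) :
    Zᴴ * Z * (U * Df * star U) * (U * Dg * star U)
      = U * (star (star U * Z * U) * (star U * Z * U) * Df * Dg) * star U := by
  have hc1 : ∀ X : Matrix (Fin n) (Fin n) ℂ, U * (Uᴴ * X) = X := by
    intro X; rw [← Matrix.mul_assoc, h2, Matrix.one_mul]
  have hc2 : ∀ X : Matrix (Fin n) (Fin n) ℂ, Uᴴ * (U * X) = X := by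
    intro X; rw [← Matrix.mul_assoc, h1, Matrix.one_mul]
  simp only [Matrix.star_eq_conjTranspose, Matrix.conjTranspose_mul,
    Matrix.conjTranspose_conjTranspose, Matrix.mul_assoc, hc1, hc2]

lemma normal_conj {n : ℕ} (Z : Matrix (Fin n) (Fin n) ℂ) (U : Matrix (Fin n) (Fin n) ℂ)
    (h1 : Uᴴ * U = 1) (h2 : U * Uᴴ = 1) (hZ : Zᴴ * Z = Z * Zᴴ) :
    star (star U * Z * U) * (star U * Z * U)
      = (star U * Z * U) * star (star U * Z * U) := by
  have hc1 : ∀ X : Matrix (Fin n) (Fin n) ℂ, U * (Uᴴ * X) = X := by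
    intro X; rw [← Matrix.mul_assoc, h2, Matrix.one_mul]
  have hc2 : ∀ X : Matrix (Fin n) (Fin n) ℂ, Uᴴ * (U * X) = X := by
    intro X; rw [← Matrix.mul_assoc, h1, Matrix.one_mul]
  have hZ' : ∀ X : Matrix (Fin n) (Fin n) ℂ, Zᴴ * (Z * X) = Z * (Zᴴ * X) := by
    intro X; rw [← Matrix.mul_assoc, hZ, Matrix.mul_assoc]
  simp only [Matrix.star_eq_conjTranspose, Matrix.conjTranspose_mul,
    Matrix.conjTranspose_conjTranspose, Matrix.mul_assoc, hc1, hc2, hZ']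

lemma trace_conj {n : ℕ} (X : Matrix (Fin n) (Fin n) ℂ) (U : Matrix (Fin n) (Fin n) ℂ)
    (h1 : Uᴴ * U = 1) :
    Matrix.trace (U * X * star U) = Matrix.trace X := by
  rw [Matrix.star_eq_conjTranspose, Matrix.trace_mul_cycle, h1, Matrix.one_mul]

theorem trace_chebyshev_monotone {n : ℕ} (A B Z : Matrix (Fin n) (Fin n) ℂ)
    (hA : A.IsHermitian) (hB : B.IsHermitian) (hZ : Zᴴ * Z = Z * Zᴴ)
    (hmono : MonotonePair A B) :
    Matrix.trace (Zᴴ * A * Z * B) ≤ Matrix.trace (Zᴴ * Z * A * B) := by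
  obtain ⟨C, hC, f, g, hf, hg, hAeq, hBeq⟩ := hmono
  have h1 : (hC.eigenvectorUnitary : Matrix (Fin n) (Fin n) ℂ)ᴴ
      * (hC.eigenvectorUnitary : Matrix (Fin n) (Fin n) ℂ) = 1 := by
    exact Matrix.UnitaryGroup.star_mul_self hC.eigenvectorUnitary
  have h2 : (hC.eigenvectorUnitary : Matrix (Fin n) (Fin n) ℂ)
      * (hC.eigenvectorUnitary : Matrix (Fin n) (Fin n) ℂ)ᴴ = 1 := by
    exact hC.eigenvectorUnitary.2.2
  set U : Matrix (Fin n) (Fin n) ℂ := (hC.eigenvectorUnitary : Matrix (Fin n) (Fin n) ℂ)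
    with hUdef
  set μ : Fin n → ℝ := hC.eigenvalues with hμdef
  set Df : Matrix (Fin n) (Fin n) ℂ := Matrix.diagonal (fun i => (f (μ i) : ℂ)) with hDf
  set Dg : Matrix (Fin n) (Fin n) ℂ := Matrix.diagonal (fun i => (g (μ i) : ℂ)) with hDg
  set W : Matrix (Fin n) (Fin n) ℂ := star U * Z * U with hWdef
  have hAe : A = U * Df * star U := hAeq
  have hBe : B = U * Dg * star U := hBeq
  have hWn : star W * W = W * star W := normal_conj Z U h1 h2 hZ
  have hbal : ∀ j, ∑ i, (‖W i j‖^2 : ℝ) = ∑ i, (‖W j i‖^2 : ℝ) := normal_balance W hWn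
  have hp : ∀ i j, (0:ℝ) ≤ ‖W i j‖^2 := fun i j => sq_nonneg _
  have hL : Matrix.trace (Zᴴ * A * Z * B)
      = ((∑ j, ∑ i, (‖W i j‖^2 : ℝ) * f (μ i) * g (μ j) : ℝ) : ℂ) := by
    rw [hAe, hBe, conj_eq1 Z U h1 h2 Df Dg, trace_conj _ U h1, ← hWdef, hDf, hDg,
      trace_form1 W (fun i => f (μ i)) (fun i => g (μ i))]
  have hR : Matrix.trace (Zᴴ * Z * A * B)
      = ((∑ j, ∑ i, (‖W i j‖^2 : ℝ) * f (μ j) * g (μ j) : ℝ) : ℂ) := by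
    rw [hAe, hBe, conj_eq2 Z U h1 h2 Df Dg, trace_conj _ U h1, ← hWdef, hDf, hDg,
      trace_form2 W (fun i => f (μ i)) (fun i => g (μ i))]
  rw [hL, hR]
  have key := key_ineq (fun i j => (‖W i j‖^2 : ℝ)) hp hbal μ
    (fun i => f (μ i)) (fun i => g (μ i))
    (fun i j hij => hf hij) (fun i j hij => hg hij)
  exact_mod_cast key
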